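/- Let M be a countable non-standard model of PA and suppose the addition function ⊕ of M (on domain ℕ) is computable. Then for every element c ∈ M and every n ∈ ℕ, the relation 'p̄_n^M divides c in M' is decidable uniformly in n, where p_n is the n-th prime. -/

import Mathlib

open FirstOrder Language

inductive ArithFunc : ℕ → Type
  | zero : ArithFunc 0
  | one : ArithFunc 0
  | plus : ArithFunc 2
  | times : ArithFunc 2

inductive ArithRel : ℕ → Type
  | le : ArithRel 2

/-- The language of arithmetic {0, 1, +, ×, ≤}. -/
def LA : Language := ⟨ArithFunc, ArithRel⟩

def zeroT {α} : LA.Term α := Term.func ArithFunc.zero ![]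
def oneT {α} : LA.Term α := Term.func ArithFunc.one ![]
def plusT {α} (t s : LA.Term α) : LA.Term α := Term.func ArithFunc.plus ![t, s]
def timesT {α} (t s : LA.Term α) : LA.Term α := Term.func ArithFunc.times ![t, s]

/-- Numerals: 0̄ = 0, (n+1)̄ = n̄ + 1 (so n̄ = 1 + ⋯ + 1, n times). -/
def numeral {α} : ℕ → LA.Term α
  | 0 => zeroT
  | 1 => oneT
  | (n + 2) => plusT (numeral (n+1)) oneT

/-- Substitute a term for the single bound variable of a bounded formula, in context. -/
def sub1 {α} (φ : LA.BoundedFormula α 1) (t : LA.Term (α ⊕ Fin 1)) : LA.BoundedFormula α 1 :=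
  BoundedFormula.relabel id
    (φ.toFormula.subst (Sum.elim (fun a => Term.var (Sum.inl a)) fun _ => t))

/-- φ(0) -/
def atZero {α} (φ : LA.BoundedFormula α 1) : LA.Formula α :=
  φ.toFormula.subst (Sum.elim Term.var fun _ => zeroT)

/-- `Formula.iAlls` with its December 2024 signature and body (Mathlib now takes a formula over
`α ⊕ β` instead of a relabelling map). -/
noncomputable def iAllsOld {L : Language} {α β γ : Type*} [Finite γ] (f : α → β ⊕ γ)
    (φ : L.Formula α) : L.Formula β :=
  let e := Classical.choice (Classical.choose_spec (Finite.exists_equiv_fin γ))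
  (BoundedFormula.relabel (fun a => Sum.map id e (f a)) φ).alls

/-- The universal closure of the induction axiom for φ (with parameter variables Fin k). -/
noncomputable def indSent {k : ℕ} (φ : LA.BoundedFormula (Fin k) 1) : LA.Sentence :=
  iAllsOld (Sum.inr : Fin k → Empty ⊕ Fin k)
    (((atZero φ) ⊓ ((φ ⟹ sub1 φ (plusT (Term.var (Sum.inr 0)) oneT)).all)) ⟹ φ.all)

def ax1 : LA.Sentence := (∼(Term.bdEqual (plusT (Term.var (Sum.inr 0)) oneT) zeroT)).all
def ax2 : LA.Sentence :=
  ((Term.bdEqual (plusT (Term.var (Sum.inr 0)) oneT) (plusT (Term.var (Sum.inr 1)) oneT) ⟹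
    Term.bdEqual (Term.var (Sum.inr 0)) (Term.var (Sum.inr 1))).all).all
def ax3 : LA.Sentence := (Term.bdEqual (plusT (Term.var (Sum.inr 0)) zeroT) (Term.var (Sum.inr 0))).all
def ax4 : LA.Sentence :=
  ((Term.bdEqual (plusT (Term.var (Sum.inr 0)) (plusT (Term.var (Sum.inr 1)) oneT))
    (plusT (plusT (Term.var (Sum.inr 0)) (Term.var (Sum.inr 1))) oneT)).all).all
def ax5 : LA.Sentence := (Term.bdEqual (timesT (Term.var (Sum.inr 0)) zeroT) zeroT).all
def ax6 : LA.Sentence :=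
  ((Term.bdEqual (timesT (Term.var (Sum.inr 0)) (plusT (Term.var (Sum.inr 1)) oneT))
    (plusT (timesT (Term.var (Sum.inr 0)) (Term.var (Sum.inr 1))) (Term.var (Sum.inr 0)))).all).all
/-- x ≤ y ↔ ∃ z, x + z = y -/
def axLe : LA.Sentence :=
  (((BoundedFormula.rel (n := 2) ArithRel.le ![Term.var (Sum.inr 0), Term.var (Sum.inr 1)]).iff
    ((Term.bdEqual (plusT (Term.var (Sum.inr 0)) (Term.var (Sum.inr 2)))
      (Term.var (Sum.inr 1))).ex)).all).all

/-- First-order Peano arithmetic, with full induction schema (with parameters). -/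
noncomputable def PA : LA.Theory :=
  {ax1, ax2, ax3, ax4, ax5, ax6, axLe} ∪ ⋃ k : ℕ, Set.range (indSent (k := k))

/-- The interpretation in `M` of the numeral `n̄`. -/
def std (M : Type*) [LA.Structure M] (n : ℕ) : M :=
  (numeral n).realize Empty.elim

def addM {M : Type*} [LA.Structure M] (a b : M) : M := Structure.funMap (L := LA) ArithFunc.plus ![a, b]
def mulM {M : Type*} [LA.Structure M] (a b : M) : M := Structure.funMap (L := LA) ArithFunc.times ![a, b]
def zeroM (M : Type*) [LA.Structure M] : M := Structure.funMap (L := LA) ArithFunc.zero ![]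
def oneM (M : Type*) [LA.Structure M] : M := Structure.funMap (L := LA) ArithFunc.one ![]
def leM {M : Type*} [LA.Structure M] (a b : M) : Prop := Structure.RelMap (L := LA) ArithRel.le ![a, b]

/-- The standard model ℕ. -/
def stdNat : LA.Structure ℕ where
  funMap {_} f v :=
    match f with
    | .zero => 0
    | .one => 1
    | .plus => v 0 + v 1
    | .times => v 0 * v 1
  RelMap {_} r v :=
    match r with
    | .le => v 0 ≤ v 1

attribute [instance] stdNat
/-- The `L_A`-structure on ℕ with operations ⊕ = f, ⊗ = g, relation r and constants n0, n1. -/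
def mkStructure (f g : ℕ → ℕ → ℕ) (r : ℕ → ℕ → Prop) (n0 n1 : ℕ) : LA.Structure ℕ where
  funMap {_} F v :=
    match F with
    | .zero => n0
    | .one => n1
    | .plus => f (v 0) (v 1)
    | .times => g (v 0) (v 1)
  RelMap {_} R v :=
    match R with
    | .le => r (v 0) (v 1)

/-!
Divisibility of `c` by a standard number `p̄` is decided by a single unbounded search: look for
`q ∈ M` and `j < p` with `c = q ⊗ p̄ ⊕ j̄`. Such a pair exists because Euclidean division by `p̄`
is provable in PA, and `p̄` divides `c` iff `j = 0` because the remainder is unique. The search is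
computable when `⊕` is, since `q ⊗ p̄ = q ⊕ ⋯ ⊕ q` and `j̄ = 1 ⊕ ⋯ ⊕ 1` only involve addition, and
`n ↦ p_n` is computable.
-/

infixl:65 " ⊕ₘ " => addM
infixl:70 " ⊗ₘ " => mulM

section Formulas

variable {M : Type*} [LA.Structure M]

@[simp] lemma realize_zeroT {α} (v : α → M) : zeroT.realize v = zeroM M := by
  simp only [zeroT, Term.realize, zeroM]; congr; funext i; exact i.elim0

@[simp] lemma realize_oneT {α} (v : α → M) : oneT.realize v = oneM M := by
  simp only [oneT, Term.realize, oneM]; congr; funext i; exact i.elim0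

@[simp] lemma realize_plusT {α} (v : α → M) (t s : LA.Term α) :
    (plusT t s).realize v = t.realize v ⊕ₘ s.realize v := by
  simp only [plusT, Term.realize, addM]; congr; funext i; fin_cases i <;> rfl

@[simp] lemma realize_timesT {α} (v : α → M) (t s : LA.Term α) :
    (timesT t s).realize v = t.realize v ⊗ₘ s.realize v := by
  simp only [timesT, Term.realize, mulM]; congr; funext i; fin_cases i <;> rfl

lemma realize_atZero {k} (φ : LA.BoundedFormula (Fin k) 1) (v : Fin k → M) :
    (atZero φ).Realize v ↔ φ.Realize v ![zeroM M] := by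
  rw [atZero, Formula.Realize, BoundedFormula.realize_subst, ← Formula.Realize,
    BoundedFormula.realize_toFormula]
  congr!
  funext i; fin_cases i; simp

lemma realize_sub1 {k} (φ : LA.BoundedFormula (Fin k) 1) (t : LA.Term (Fin k ⊕ Fin 1))
    (v : Fin k → M) (a : M) :
    (sub1 φ t).Realize v ![a] ↔ φ.Realize v ![t.realize (Sum.elim v ![a])] := by
  simp only [sub1, BoundedFormula.realize_relabel, BoundedFormula.realize_subst,
    Fin.castAdd_zero, Function.comp_id]
  rw [show (![a] ∘ Fin.natAdd 1 : Fin 0 → M) = default from Subsingleton.elim _ _,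
    ← Formula.Realize, BoundedFormula.realize_toFormula]
  congr!
  funext i; fin_cases i; simp

lemma realize_iAllsOld {γ : Type*} [Finite γ] {α β : Type*} (f : α → β ⊕ γ) (φ : LA.Formula α)
    (v : β → M) (xs : Fin 0 → M) :
    BoundedFormula.Realize (iAllsOld f φ) v xs ↔
      ∀ i : γ → M, φ.Realize fun a => Sum.elim v i (f a) := by
  let e := Classical.choice (Classical.choose_spec (Finite.exists_equiv_fin γ))
  rw [iAllsOld, Subsingleton.elim xs default]
  change Formula.Realize _ v ↔ _
  simp only [Nat.add_zero, BoundedFormula.realize_alls, BoundedFormula.realize_relabel]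
  refine (Equiv.arrowCongr e (Equiv.refl M)).symm.forall_congr fun i => ?_
  rw [Formula.Realize, iff_iff_eq]
  congr 1
  · funext a; rcases h : f a with b | c <;> simp [h, e]
  · exact Subsingleton.elim _ _

end Formulas

section Axioms

variable {M : Type*} [LA.Structure M] [PA.Model M]

lemma addM_one_ne_zeroM (x : M) : x ⊕ₘ oneM M ≠ zeroM M := by
  have h : M ⊨ ax1 := Theory.realize_sentence_of_mem PA (by simp [PA])
  simpa [ax1, Sentence.Realize, Formula.Realize, Fin.snoc] using h x

lemma addM_one_injective : Function.Injective fun x : M => x ⊕ₘ oneM M := fun x y => by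
  have h : M ⊨ ax2 := Theory.realize_sentence_of_mem PA (by simp [PA])
  simpa [ax2, Sentence.Realize, Formula.Realize, Fin.snoc] using h x y

lemma addM_zeroM (x : M) : x ⊕ₘ zeroM M = x := by
  have h : M ⊨ ax3 := Theory.realize_sentence_of_mem PA (by simp [PA])
  simpa [ax3, Sentence.Realize, Formula.Realize, Fin.snoc] using h x

lemma addM_addM_one (x y : M) : x ⊕ₘ (y ⊕ₘ oneM M) = x ⊕ₘ y ⊕ₘ oneM M := by
  have h : M ⊨ ax4 := Theory.realize_sentence_of_mem PA (by simp [PA])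
  simpa [ax4, Sentence.Realize, Formula.Realize, Fin.snoc] using h x y

lemma mulM_zeroM (x : M) : x ⊗ₘ zeroM M = zeroM M := by
  have h : M ⊨ ax5 := Theory.realize_sentence_of_mem PA (by simp [PA])
  simpa [ax5, Sentence.Realize, Formula.Realize, Fin.snoc] using h x

lemma mulM_addM_one (x y : M) : x ⊗ₘ (y ⊕ₘ oneM M) = x ⊗ₘ y ⊕ₘ x := by
  have h : M ⊨ ax6 := Theory.realize_sentence_of_mem PA (by simp [PA])
  simpa [ax6, Sentence.Realize, Formula.Realize, Fin.snoc] using h x y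

lemma PA_induction {P : M → Prop} {k : ℕ} (φ : LA.BoundedFormula (Fin k) 1) (v : Fin k → M)
    (hφ : ∀ x, φ.Realize v ![x] ↔ P x) (zero : P (zeroM M))
    (succ : ∀ x, P x → P (x ⊕ₘ oneM M)) (x : M) : P x := by
  have h : M ⊨ indSent φ :=
    Theory.realize_sentence_of_mem PA (Or.inr (Set.mem_iUnion.2 ⟨k, φ, rfl⟩))
  have snoc_eq (a : M) : Fin.snoc (default : Fin 0 → M) a = ![a] := by
    funext i; fin_cases i; rfl
  simp only [indSent, Sentence.Realize, realize_iAllsOld, Formula.Realize,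
    BoundedFormula.realize_imp, BoundedFormula.realize_inf, BoundedFormula.realize_all,
    snoc_eq] at h
  refine (hφ x).1 (h v ⟨(realize_atZero φ v).2 ((hφ _).2 zero), fun a ha => ?_⟩ x)
  simpa [realize_sub1, hφ] using succ a ((hφ a).1 ha)

end Axioms

section Arithmetic

variable {M : Type*} [LA.Structure M] [PA.Model M]

lemma zeroM_addM (x : M) : zeroM M ⊕ₘ x = x := by
  refine PA_induction (P := fun x => zeroM M ⊕ₘ x = x) (k := 0)
    (Term.bdEqual (plusT zeroT (&0)) (&0)) default (fun x => by simp) (addM_zeroM _)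
    (fun x hx => ?_) x
  rw [addM_addM_one, hx]

lemma addM_one_addM (a x : M) : a ⊕ₘ oneM M ⊕ₘ x = a ⊕ₘ x ⊕ₘ oneM M := by
  refine PA_induction (P := fun x => a ⊕ₘ oneM M ⊕ₘ x = a ⊕ₘ x ⊕ₘ oneM M)
    (Term.bdEqual (plusT (plusT (var (Sum.inl 0)) oneT) (&0))
      (plusT (plusT (var (Sum.inl 0)) (&0)) oneT)) ![a] (fun x => by simp)
    (by simp only [addM_zeroM]) (fun x hx => ?_) x
  rw [addM_addM_one, hx, addM_addM_one]

lemma addM_comm (a x : M) : a ⊕ₘ x = x ⊕ₘ a := by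
  refine PA_induction (P := fun x => a ⊕ₘ x = x ⊕ₘ a)
    (Term.bdEqual (plusT (var (Sum.inl 0)) (&0)) (plusT (&0) (var (Sum.inl 0)))) ![a]
    (fun x => by simp) (by rw [addM_zeroM, zeroM_addM]) (fun x hx => ?_) x
  rw [addM_addM_one, hx, addM_one_addM]

lemma addM_assoc (a b x : M) : a ⊕ₘ b ⊕ₘ x = a ⊕ₘ (b ⊕ₘ x) := by
  refine PA_induction (P := fun x => a ⊕ₘ b ⊕ₘ x = a ⊕ₘ (b ⊕ₘ x))
    (Term.bdEqual (plusT (plusT (var (Sum.inl 0)) (var (Sum.inl 1))) (&0))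
      (plusT (var (Sum.inl 0)) (plusT (var (Sum.inl 1)) (&0)))) ![a, b]
    (fun x => by simp) (by rw [addM_zeroM, addM_zeroM]) (fun x hx => ?_) x
  rw [addM_addM_one, hx, addM_addM_one, addM_addM_one]

lemma addM_right_cancel {a b x : M} : a ⊕ₘ x = b ⊕ₘ x → a = b := by
  refine PA_induction (P := fun x => a ⊕ₘ x = b ⊕ₘ x → a = b)
    (Term.bdEqual (plusT (var (Sum.inl 0)) (&0)) (plusT (var (Sum.inl 1)) (&0)) ⟹
      Term.bdEqual (var (Sum.inl 0)) (var (Sum.inl 1))) ![a, b]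
    (fun x => by simp) (by simp only [addM_zeroM, imp_self]) (fun x hx hab => hx ?_) x
  rw [addM_addM_one, addM_addM_one] at hab
  exact addM_one_injective hab

lemma addM_left_cancel {a b x : M} (h : x ⊕ₘ a = x ⊕ₘ b) : a = b :=
  addM_right_cancel (x := x) (by rwa [addM_comm x a, addM_comm x b] at h)

lemma eq_zeroM_or_exists_eq_addM_one (x : M) : x = zeroM M ∨ ∃ w, x = w ⊕ₘ oneM M := by
  refine PA_induction (P := fun x => x = zeroM M ∨ ∃ w, x = w ⊕ₘ oneM M) (k := 0)
    (Term.bdEqual (&0) zeroT ⊔ (Term.bdEqual (&0) (plusT (&1) oneT)).ex) default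
    (fun x => by simp) (Or.inl rfl) (fun x _ => Or.inr ⟨x, rfl⟩) x

lemma exists_addM_eq_or_exists_addM_eq (a x : M) : (∃ z, a ⊕ₘ z = x) ∨ ∃ z, x ⊕ₘ z = a := by
  refine PA_induction (P := fun x => (∃ z, a ⊕ₘ z = x) ∨ ∃ z, x ⊕ₘ z = a)
    ((Term.bdEqual (plusT (var (Sum.inl 0)) (&1)) (&0)).ex ⊔
      (Term.bdEqual (plusT (&0) (&1)) (var (Sum.inl 0))).ex) ![a]
    (fun x => by simp) (Or.inr ⟨a, zeroM_addM a⟩) (fun x hx => ?_) x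
  obtain ⟨z, rfl⟩ | ⟨z, rfl⟩ := hx
  · exact Or.inl ⟨z ⊕ₘ oneM M, addM_addM_one a z⟩
  obtain rfl | ⟨w, rfl⟩ := eq_zeroM_or_exists_eq_addM_one z
  · exact Or.inl ⟨oneM M, by rw [addM_zeroM]⟩
  · exact Or.inr ⟨w, by rw [addM_one_addM, addM_addM_one]⟩

end Arithmetic

section Numerals

variable {M : Type*} [LA.Structure M]

@[simp] lemma std_zero : std M 0 = zeroM M := by simp [std, numeral]

@[simp] lemma std_one : std M 1 = oneM M := by simp [std, numeral]

variable [PA.Model M]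

lemma std_succ (n : ℕ) : std M (n + 1) = std M n ⊕ₘ oneM M := by
  cases n with
  | zero => rw [std_zero, zeroM_addM, zero_add, std_one]
  | succ n => simp [std, numeral]

@[simp] lemma realize_numeral {α} (v : α → M) (n : ℕ) : (numeral n).realize v = std M n := by
  induction n with
  | zero => simp [numeral]
  | succ n ih =>
    cases n with
    | zero => simp [numeral]
    | succ n => rw [std_succ, ← ih]; simp [numeral]

lemma std_add (a b : ℕ) : std M (a + b) = std M a ⊕ₘ std M b := by
  induction b with
  | zero => rw [add_zero, std_zero, addM_zeroM]
  | succ b ih => rw [← add_assoc, std_succ, ih, std_succ, addM_addM_one]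

lemma addM_std_ne_zeroM (a : M) {d : ℕ} (hd : 0 < d) : a ⊕ₘ std M d ≠ zeroM M := by
  obtain ⟨e, rfl⟩ := Nat.exists_eq_add_of_lt hd
  rw [zero_add, std_succ, addM_addM_one]
  exact addM_one_ne_zeroM _

lemma exists_eq_std_of_addM_eq_std {a z : M} {m : ℕ} (h : a ⊕ₘ z = std M m) :
    ∃ j ≤ m, a = std M j := by
  induction m generalizing z with
  | zero =>
    obtain rfl | ⟨w, rfl⟩ := eq_zeroM_or_exists_eq_addM_one a
    · exact ⟨0, le_rfl, std_zero.symm⟩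
    · rw [addM_one_addM, std_zero] at h
      exact absurd h (addM_one_ne_zeroM _)
  | succ m ih =>
    obtain rfl | ⟨w, rfl⟩ := eq_zeroM_or_exists_eq_addM_one z
    · exact ⟨m + 1, le_rfl, by rwa [addM_zeroM] at h⟩
    · rw [addM_addM_one, std_succ] at h
      obtain ⟨j, hj, rfl⟩ := ih (addM_one_injective h)
      exact ⟨j, hj.trans m.le_succ, rfl⟩

lemma exists_addM_eq_std_iff {a : M} {m : ℕ} :
    (∃ z, a ⊕ₘ z = std M m) ↔ ∃ j ≤ m, a = std M j :=
  ⟨fun ⟨_, h⟩ => exists_eq_std_of_addM_eq_std h, fun ⟨j, hj, ha⟩ =>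
    ⟨std M (m - j), by rw [ha, ← std_add, Nat.add_sub_cancel' hj]⟩⟩

lemma addM_addM_addM_comm (a b c d : M) : a ⊕ₘ b ⊕ₘ (c ⊕ₘ d) = a ⊕ₘ c ⊕ₘ (b ⊕ₘ d) := by
  rw [addM_assoc, ← addM_assoc b, addM_comm b c, addM_assoc c, ← addM_assoc]

lemma mulM_std_succ (y : M) (k : ℕ) : y ⊗ₘ std M (k + 1) = y ⊗ₘ std M k ⊕ₘ y := by
  rw [std_succ, mulM_addM_one]

lemma addM_mulM_std (a b : M) (k : ℕ) : (a ⊕ₘ b) ⊗ₘ std M k = a ⊗ₘ std M k ⊕ₘ b ⊗ₘ std M k := by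
  induction k with
  | zero => simp only [std_zero, mulM_zeroM, addM_zeroM]
  | succ k ih => rw [mulM_std_succ, ih, addM_addM_addM_comm, ← mulM_std_succ, ← mulM_std_succ]

lemma zeroM_mulM_std (k : ℕ) : zeroM M ⊗ₘ std M k = zeroM M := by
  induction k with
  | zero => rw [std_zero, mulM_zeroM]
  | succ k ih => rw [mulM_std_succ, ih, addM_zeroM]

lemma oneM_mulM_std (k : ℕ) : oneM M ⊗ₘ std M k = std M k := by
  induction k with
  | zero => rw [std_zero, mulM_zeroM]
  | succ k ih => rw [mulM_std_succ, ih, std_succ]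

end Numerals

section Division

variable {M : Type*} [LA.Structure M]

def IsQuotRem (x q : M) (p j : ℕ) : Prop := j < p ∧ x = q ⊗ₘ std M p ⊕ₘ std M j

variable [PA.Model M]

lemma exists_isQuotRem {p : ℕ} (hp : 0 < p) (x : M) : ∃ q j, IsQuotRem x q p j := by
  -- the standard remainder `j < p` is expressed inside `M` as `b ⊕ z = (p - 1)‾`
  refine PA_induction (P := fun x => ∃ q j, IsQuotRem x q p j) (k := 0)
    ((Term.bdEqual (&0) (plusT (timesT (&1) (numeral p)) (&2)) ⊓
      (Term.bdEqual (plusT (&2) (&3)) (numeral (p - 1))).ex).ex.ex) default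
    (fun x => ?_) ⟨zeroM M, 0, hp, ?_⟩ (fun x ⟨q, j, hj, hx⟩ => ?_) x
  · simp [exists_addM_eq_std_iff, IsQuotRem, Nat.le_sub_one_iff_lt hp, and_comm]
  · rw [zeroM_mulM_std, std_zero, addM_zeroM]
  · rcases Nat.lt_or_ge (j + 1) p with hj' | hj'
    · exact ⟨q, j + 1, hj', by rw [hx, std_succ, addM_addM_one]⟩
    · refine ⟨q ⊕ₘ oneM M, 0, hp, ?_⟩
      rw [hx, std_zero, addM_zeroM, addM_mulM_std, oneM_mulM_std, ← addM_addM_one, ← std_succ,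
        show j + 1 = p by omega]

lemma IsQuotRem.exists_eq_mulM_std_iff {x q : M} {p j : ℕ} (h : IsQuotRem x q p j) :
    (∃ y, x = y ⊗ₘ std M p) ↔ j = 0 := by
  obtain ⟨hjp, rfl⟩ := h
  refine ⟨fun ⟨y, hy⟩ => Nat.eq_zero_of_not_pos fun hj => ?_, fun hj => ⟨q, ?_⟩⟩
  · obtain ⟨z, rfl⟩ | ⟨z, rfl⟩ := exists_addM_eq_or_exists_addM_eq q y
    · rw [addM_mulM_std] at hy
      have hz : z ⊗ₘ std M p = std M j := (addM_left_cancel hy).symm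
      obtain rfl | ⟨w, rfl⟩ := eq_zeroM_or_exists_eq_addM_one z
      · exact addM_std_ne_zeroM (zeroM M) hj (by rw [zeroM_addM, ← hz, zeroM_mulM_std])
      · have : w ⊗ₘ std M p ⊕ₘ std M (p - j) ⊕ₘ std M j = zeroM M ⊕ₘ std M j := by
          rw [addM_assoc, ← std_add, Nat.sub_add_cancel hjp.le, zeroM_addM, ← hz, addM_mulM_std,
            oneM_mulM_std]
        exact addM_std_ne_zeroM _ (Nat.sub_pos_of_lt hjp) (addM_right_cancel this)
    · rw [addM_mulM_std, addM_assoc, ← addM_zeroM (y ⊗ₘ std M p), addM_assoc, zeroM_addM] at hy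
      exact addM_std_ne_zeroM _ hj (addM_left_cancel hy)
  · rw [hj, std_zero, addM_zeroM]

end Division

section Primes

lemma primrecPred_nat_prime : PrimrecPred Nat.Prime := by
  have hdvd : PrimrecRel fun m n : ℕ => m ∣ n → m = 1 :=
    ((Primrec.eq.comp (Primrec.nat_mod.comp Primrec.snd Primrec.fst) (Primrec.const 0)).not.or
      (Primrec.eq.comp Primrec.fst (Primrec.const 1))).of_eq
      fun _ => by dsimp only; rw [Nat.dvd_iff_mod_eq_zero, imp_iff_not_or]
  exact ((Primrec.nat_le.comp (Primrec.const 2) Primrec.id).and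
    (hdvd.forall_lt.comp Primrec.id Primrec.id)).of_eq fun _ => Nat.prime_def_lt.symm

lemma Primrec.nat_count {p : ℕ → Prop} [DecidablePred p] (hp : PrimrecPred p) :
    Primrec (Nat.count p) :=
  (Primrec.list_length.comp ((Primrec.listFilter hp).comp Primrec.list_range)).of_eq
    fun n => by rw [Nat.count, List.countP_eq_length_filter]

lemma computable_nth_prime : Computable (Nat.nth Nat.Prime) := by
  have h n : ∃ m, m.Prime ∧ Nat.count Nat.Prime m = n :=
    ⟨_, Nat.prime_nth_prime n, Nat.count_nth_of_infinite Nat.infinite_setOfPred_prime n⟩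
  refine (Computable.find (P := fun n m => m.Prime ∧ Nat.count Nat.Prime m = n) ?_ h).of_eq
    fun n => ?_
  · exact ((primrecPred_nat_prime.comp Primrec.snd).and (Primrec.eq.comp
      ((Primrec.nat_count primrecPred_nat_prime).comp Primrec.snd) Primrec.fst)).computablePred
  · obtain ⟨hp, hc⟩ := Nat.find_spec (h n)
    conv_rhs => rw [← hc]
    exact (Nat.nth_count hp).symm

end Primes

section ComputableAddition

variable {S : LA.Structure ℕ}

lemma computable_std (hPA : @Theory.Model LA ℕ S PA) (hadd : Computable₂ (@addM ℕ S)) :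
    Computable (@std ℕ S) := by
  let _ := S
  refine (Computable.nat_rec Computable.id (Computable.const (zeroM ℕ))
    (hadd.comp (Computable.snd.comp Computable.snd) (Computable.const (oneM ℕ))).to₂).of_eq
    fun n => ?_
  dsimp only
  induction n with
  | zero => exact std_zero.symm
  | succ n ih => rw [std_succ, ← ih]; rfl

lemma computable₂_mulM_std (hPA : @Theory.Model LA ℕ S PA) (hadd : Computable₂ (@addM ℕ S)) :
    Computable₂ fun y k => @mulM ℕ S y (@std ℕ S k) := by
  let _ := S
  refine (Computable.nat_rec Computable.snd (Computable.const (zeroM ℕ))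
    (hadd.comp (Computable.snd.comp Computable.snd) (Computable.fst.comp Computable.fst)).to₂).of_eq
    fun ⟨y, k⟩ => ?_
  dsimp only
  induction k with
  | zero => rw [std_zero, mulM_zeroM]; rfl
  | succ k ih => rw [mulM_std_succ, ← ih]

lemma computablePred_isQuotRem (hPA : @Theory.Model LA ℕ S PA) (hadd : Computable₂ (@addM ℕ S))
    {p : ℕ → ℕ} (hp : Computable p) (x : ℕ) :
    ComputablePred fun t : ℕ × ℕ => @IsQuotRem ℕ S x t.2.unpair.1 (p t.1) t.2.unpair.2 := by
  let _ := S
  have hq : Computable fun t : ℕ × ℕ => t.2.unpair.1 :=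
    Computable.fst.comp (Computable.unpair.comp Computable.snd)
  have hj : Computable fun t : ℕ × ℕ => t.2.unpair.2 :=
    Computable.snd.comp (Computable.unpair.comp Computable.snd)
  have hpt : Computable fun t : ℕ × ℕ => p t.1 := hp.comp Computable.fst
  refine (Computable.computablePred (p := fun t : ℕ × ℕ => t.2.unpair.2 < p t.1 ∧
    x = t.2.unpair.1 ⊗ₘ std ℕ (p t.1) ⊕ₘ std ℕ t.2.unpair.2) ?_).of_eq fun _ => Iff.rfl
  simp only [Bool.decide_and]
  exact Primrec.and.to_comp.comp (Primrec.nat_lt.decide.to_comp.comp hj hpt)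
    (Primrec.eq.decide.to_comp.comp (Computable.const x) (hadd.comp
      ((computable₂_mulM_std hPA hadd).comp hq hpt) ((computable_std hPA hadd).comp hj)))

end ComputableAddition

theorem stmt14_general (f g : ℕ → ℕ → ℕ) (r : ℕ → ℕ → Prop) (n0 n1 : ℕ)
    (hPA : @Theory.Model LA ℕ (mkStructure f g r n0 n1) PA)
    (hf : Computable₂ f) (c : ℕ) :
    ComputablePred (fun n : ℕ => ∃ y : ℕ,
      c = @mulM ℕ (mkStructure f g r n0 n1) y
        (@std ℕ (mkStructure f g r n0 n1) (Nat.nth Nat.Prime n))) := by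
  classical
  let S := mkStructure f g r n0 n1
  have hadd : Computable₂ (@addM ℕ S) := hf.of_eq fun _ => rfl
  have hdiv n : ∃ w : ℕ, IsQuotRem c w.unpair.1 (Nat.nth Nat.Prime n) w.unpair.2 := by
    obtain ⟨q, j, h⟩ := exists_isQuotRem (Nat.prime_nth_prime n).pos c
    exact ⟨Nat.pair q j, by simpa using h⟩
  have hfind := Computable.find (computablePred_isQuotRem hPA hadd computable_nth_prime c) hdiv
  refine (Computable.computablePred (p := fun n => (Nat.find (hdiv n)).unpair.2 = 0)
    (Primrec.eq.decide.to_comp.comp (Computable.snd.comp (Computable.unpair.comp hfind))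
      (Computable.const 0))).of_eq fun n => ?_
  exact (Nat.find_spec (hdiv n)).exists_eq_mulM_std_iff.symm

/-- If addition of a non-standard model of PA with domain ℕ is computable, then
divisibility by (numerals of) primes is decidable uniformly in `n`. -/
theorem stmt14 (f g : ℕ → ℕ → ℕ) (r : ℕ → ℕ → Prop) (n0 n1 : ℕ)
    (hPA : @Theory.Model LA ℕ (mkStructure f g r n0 n1) PA)
    (hns : IsEmpty (@FirstOrder.Language.Equiv LA ℕ ℕ (mkStructure f g r n0 n1) stdNat))
    (hf : Computable₂ f) (c : ℕ) :
    ComputablePred (fun n : ℕ => ∃ y : ℕ,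
      c = @mulM ℕ (mkStructure f g r n0 n1) y
        (@std ℕ (mkStructure f g r n0 n1) (Nat.nth Nat.Prime n))) :=
  stmt14_general f g r n0 n1 hPA hf c
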